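/- arXiv:math/0310078 — 2 statements merged into one kernel-verified Lean document; each statement's English description precedes it below -/
import Mathlib

section
/- Let G be a mixed graph (a multigraph in which some edges are directed and the rest undirected) that is 2-edge-connected. Then the undirected edges of G can be oriented so that the resulting digraph is strongly connected if and only if the digraph obtained from G by contracting all undirected edges is strongly connected. -/
/-
If the undirected edges are oriented into a strongly connected digraph, each of its arcs either
joins two vertices of one contracted class or is a directed edge of `G`, so the contraction is
strongly connected.

Conversely (Boesch–Tindell), in a strongly connected mixed graph an undirected edge `e` that is not
a bridge can be oriented so that its head reaches its tail without using `e`; orienting `e`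
together with the undirected edges of such a return walk (pruned so that no edge is used in both
directions) closes a directed cycle, and keeps the mixed graph strongly connected. Since the graph
may be infinite, this step is fed into Zorn's lemma on partial orientations in which every newly
oriented edge lies on a directed cycle: unlike mixed strong connectivity itself, this property
passes to unions of chains, and it still implies mixed strong connectivity.
-/

/-- A mixed graph: a multigraph with endpoint maps `fst`, `snd`, in which the
edges in `directed` are directed from `fst e` to `snd e`, and the remaining
edges are undirected. -/
structure MixedGraph (V E : Type*) where
  fst : E → V
  snd : E → V
  directed : Set E

namespace MixedGraph

variable {V E : Type*} (G : MixedGraph V E)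

/-- `o : E → Bool` orients every edge (`true` = from `fst` to `snd`).  It is an
orientation of the mixed graph if it keeps every directed edge as given. -/
def IsOrientation (o : E → Bool) : Prop := ∀ e ∈ G.directed, o e = true

/-- One directed step in the digraph obtained from the full orientation `o`. -/
def step (o : E → Bool) (u v : V) : Prop :=
  ∃ e, (o e = true ∧ G.fst e = u ∧ G.snd e = v) ∨
       (o e = false ∧ G.snd e = u ∧ G.fst e = v)

/-- The digraph given by the orientation `o` is strongly connected. -/
def StrongConn (o : E → Bool) : Prop :=
  ∀ u v : V, Relation.ReflTransGen (G.step o) u v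

/-- Adjacency in the underlying undirected multigraph, using only edges in `S`. -/
def adjIn (S : Set E) (u v : V) : Prop :=
  ∃ e ∈ S, (G.fst e = u ∧ G.snd e = v) ∨ (G.fst e = v ∧ G.snd e = u)

/-- `G` is 2-edge-connected: connected, and still connected after removing any
single edge (no bridge). -/
def TwoEdgeConnected : Prop :=
  (∀ u v : V, Relation.ReflTransGen (G.adjIn Set.univ) u v) ∧
  ∀ e : E, ∀ u v : V, Relation.ReflTransGen (G.adjIn {e' | e' ≠ e}) u v

end MixedGraph

namespace MixedGraph

variable {V E : Type*} (G : MixedGraph V E)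

/-- Two vertices are related if they are the endpoints of some undirected edge. -/
def undirRel (a b : V) : Prop :=
  ∃ e, e ∉ G.directed ∧ ((G.fst e = a ∧ G.snd e = b) ∨ (G.fst e = b ∧ G.snd e = a))

/-- One arc of the digraph obtained from `G` by contracting all undirected
edges (identifying the endpoints of every undirected edge, keeping the
directed edges). -/
def contractedStep (x y : Quot G.undirRel) : Prop :=
  ∃ e ∈ G.directed, Quot.mk G.undirRel (G.fst e) = x ∧ Quot.mk G.undirRel (G.snd e) = y

end MixedGraph

open Relation Set

theorem Relation.ReflTransGen.or_exists_from_mem {α : Type*} {r r' : α → α → Prop} {T : Set α}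
    {a b : α} (h : ∀ x y, r x y → r' x y ∨ y ∈ T) (hab : ReflTransGen r a b) :
    ReflTransGen r' a b ∨ ∃ t ∈ T, ReflTransGen r' t b := by
  induction hab with
  | refl => exact Or.inl .refl
  | @tail c d _ hcd ih =>
    rcases h c d hcd with hcd' | hd
    · exact ih.imp (·.tail hcd') fun ⟨t, ht, htc⟩ => ⟨t, ht, htc.tail hcd'⟩
    · exact Or.inr ⟨d, hd, .refl⟩

theorem Relation.ReflTransGen.or_exists_to_mem {α : Type*} {r r' : α → α → Prop} {T : Set α}
    {a b : α} (h : ∀ x y, r x y → r' x y ∨ x ∈ T) (hab : ReflTransGen r a b) :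
    ReflTransGen r' a b ∨ ∃ t ∈ T, ReflTransGen r' a t := by
  simpa only [reflTransGen_swap] using
    (reflTransGen_swap.mpr hab).or_exists_from_mem (r' := Function.swap r') fun x y => h y x

theorem Set.InjOn.fst_insert {α : Type*} {C : Set (α × Bool)} {q : α × Bool}
    (hC : InjOn Prod.fst C) (hq : (q.1, !q.2) ∉ C) : InjOn Prod.fst (insert q C) := by
  by_cases hqC : q ∈ C
  · rwa [insert_eq_of_mem hqC]
  refine (injOn_insert hqC).2 ⟨hC, ?_⟩
  rintro ⟨⟨a, b⟩, hp, rfl⟩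
  rcases Bool.eq_or_eq_not b q.2 with rfl | rfl
  · exact hqC hp
  · exact hq hp

namespace MixedGraph

variable {V E : Type*} (G : MixedGraph V E)

/-- `(e, true)` traverses `e` from `fst e` to `snd e`, and `(e, false)` backwards. -/
def tail (p : E × Bool) : V := if p.2 then G.fst p.1 else G.snd p.1

def head (p : E × Bool) : V := if p.2 then G.snd p.1 else G.fst p.1

def arcRel (A : Set (E × Bool)) (u v : V) : Prop := ∃ p ∈ A, G.tail p = u ∧ G.head p = v

def baseArcs : Set (E × Bool) := G.directed ×ˢ {true}

/-- The arcs of the mixed graph in which the edges met by `A` are oriented as in `A` and all other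
edges are undirected (usable in both directions). -/
def mixedArcs (A : Set (E × Bool)) : Set (E × Bool) := {p | p ∈ A ∨ ∀ b, (p.1, b) ∉ A}

/-- A partial orientation (a set of arcs with at most one arc per edge) extending the given one,
in which every newly oriented edge lies on a directed cycle. -/
structure IsAdmissible (A : Set (E × Bool)) : Prop where
  baseArcs_subset : G.baseArcs ⊆ A
  injOn_fst : InjOn Prod.fst A
  reflTransGen_head_tail :
    ∀ p ∈ A, p.1 ∉ G.directed → ReflTransGen (G.arcRel A) (G.head p) (G.tail p)

instance : Std.Symm G.undirRel := ⟨fun _ _ ⟨e, he, h⟩ => ⟨e, he, h.symm⟩⟩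

variable {G}

@[simp]
theorem head_not (e : E) (b : Bool) : G.head (e, !b) = G.tail (e, b) := by
  cases b <;> rfl

@[simp]
theorem tail_not (e : E) (b : Bool) : G.tail (e, !b) = G.head (e, b) := by
  cases b <;> rfl

theorem tail_mem (p : E × Bool) : G.tail p ∈ ({G.fst p.1, G.snd p.1} : Set V) := by
  unfold tail; split <;> simp

theorem head_mem (p : E × Bool) : G.head p ∈ ({G.fst p.1, G.snd p.1} : Set V) := by
  unfold head; split <;> simp

theorem reflTransGen_arcRel_mono {A B : Set (E × Bool)} (h : A ⊆ B) {u v : V}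
    (huv : ReflTransGen (G.arcRel A) u v) : ReflTransGen (G.arcRel B) u v :=
  ReflTransGen.mono (fun _ _ ⟨p, hp, hu, hv⟩ => ⟨p, h hp, hu, hv⟩) _ _ huv

theorem adjIn_iff {S : Set E} {u v : V} :
    G.adjIn S u v ↔ ∃ p : E × Bool, p.1 ∈ S ∧ G.tail p = u ∧ G.head p = v := by
  constructor
  · rintro ⟨e, he, ⟨hu, hv⟩ | ⟨hv, hu⟩⟩
    exacts [⟨(e, true), he, hu, hv⟩, ⟨(e, false), he, hu, hv⟩]
  · rintro ⟨⟨e, _ | _⟩, he, hu, hv⟩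
    exacts [⟨e, he, Or.inr ⟨hv, hu⟩⟩, ⟨e, he, Or.inl ⟨hu, hv⟩⟩]

theorem step_iff {o : E → Bool} {u v : V} : G.step o u v ↔ G.arcRel {p | o p.1 = p.2} u v := by
  constructor
  · rintro ⟨e, ⟨h, hu, hv⟩ | ⟨h, hu, hv⟩⟩
    exacts [⟨(e, true), h, hu, hv⟩, ⟨(e, false), h, hu, hv⟩]
  · rintro ⟨⟨e, _ | _⟩, h, hu, hv⟩
    exacts [⟨e, Or.inr ⟨h, hu, hv⟩⟩, ⟨e, Or.inl ⟨h, hu, hv⟩⟩]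

theorem subset_mixedArcs (A : Set (E × Bool)) : A ⊆ mixedArcs A := fun _ => Or.inl

theorem exists_mem_mixedArcs (A : Set (E × Bool)) (e : E) : ∃ b, (e, b) ∈ mixedArcs A := by
  by_cases h : ∃ b, (e, b) ∈ A
  · exact h.imp fun _ => Or.inl
  · exact ⟨true, Or.inr (not_exists.mp h)⟩

theorem reflTransGen_contractedStep_of_strongConn {o : E → Bool} (ho : G.IsOrientation o)
    (hs : G.StrongConn o) (x y : Quot G.undirRel) : ReflTransGen G.contractedStep x y := by
  induction x using Quot.ind with | _ u =>
  induction y using Quot.ind with | _ v =>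
  refine ReflTransGen.lift' (Quot.mk G.undirRel) (fun a b hab => ?_) _ _ (hs u v)
  obtain ⟨e, hab⟩ := hab
  by_cases he : e ∈ G.directed
  · obtain ⟨-, rfl, rfl⟩ := hab.resolve_right (by simp [ho e he])
    exact .single ⟨e, he, rfl, rfl⟩
  · have : G.undirRel a b := ⟨e, he, hab.imp (fun h => h.2) fun h => h.2.symm⟩
    show ReflTransGen _ (Quot.mk _ a) (Quot.mk _ b)
    rw [Quot.sound this]

theorem reflTransGen_mixedArcs_baseArcs_of_mk_eq {u v : V}
    (h : Quot.mk G.undirRel u = Quot.mk G.undirRel v) :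
    ReflTransGen (G.arcRel (mixedArcs G.baseArcs)) u v := by
  rw [Quot.eq, EqvGen.eqvGen_eq_reflTransGen] at h
  refine ReflTransGen.mono (fun a b ⟨e, he, hab⟩ => ?_) _ _ h
  have hbase : ∀ c, (e, c) ∉ G.baseArcs := fun _ hc => he hc.1
  rcases hab with ⟨ha, hb⟩ | ⟨hb, ha⟩
  exacts [⟨(e, true), Or.inr hbase, ha, hb⟩, ⟨(e, false), Or.inr hbase, ha, hb⟩]

theorem reflTransGen_mixedArcs_baseArcs
    (hc : ∀ x y : Quot G.undirRel, ReflTransGen G.contractedStep x y) (u v : V) :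
    ReflTransGen (G.arcRel (mixedArcs G.baseArcs)) u v := by
  suffices ∀ x y, ReflTransGen G.contractedStep x y → ∀ u v,
      Quot.mk G.undirRel u = x → Quot.mk G.undirRel v = y →
        ReflTransGen (G.arcRel (mixedArcs G.baseArcs)) u v from this _ _ (hc _ _) u v rfl rfl
  intro x y hxy
  induction hxy with
  | refl => rintro u v rfl h; exact reflTransGen_mixedArcs_baseArcs_of_mk_eq h.symm
  | @tail y z _ hyz ih =>
    rintro u v rfl rfl
    obtain ⟨e, he, hfst, hsnd⟩ := hyz
    have harc : G.arcRel (mixedArcs G.baseArcs) (G.fst e) (G.snd e) :=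
      ⟨(e, true), Or.inl ⟨he, rfl⟩, rfl, rfl⟩
    exact ((ih u _ rfl hfst).tail harc).trans (reflTransGen_mixedArcs_baseArcs_of_mk_eq hsnd)

theorem exists_endpoint_reflTransGen_avoiding {B : Set (E × Bool)}
    (hS : ∀ u v, ReflTransGen (G.arcRel B) u v) (e₀ : E) (x : V) :
    (∃ t ∈ ({G.fst e₀, G.snd e₀} : Set V), ReflTransGen (G.arcRel {p ∈ B | p.1 ≠ e₀}) t x) ∧
      ∃ t ∈ ({G.fst e₀, G.snd e₀} : Set V), ReflTransGen (G.arcRel {p ∈ B | p.1 ≠ e₀}) x t := by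
  have hstep : ∀ a b, G.arcRel B a b → G.arcRel {p ∈ B | p.1 ≠ e₀} a b ∨
      a ∈ ({G.fst e₀, G.snd e₀} : Set V) ∧ b ∈ ({G.fst e₀, G.snd e₀} : Set V) := by
    rintro a b ⟨p, hp, rfl, rfl⟩
    by_cases hpe : p.1 = e₀
    · have htail := tail_mem (G := G) p
      have hhead := head_mem (G := G) p
      rw [hpe] at htail hhead
      exact Or.inr ⟨htail, hhead⟩
    · exact Or.inl ⟨p, ⟨hp, hpe⟩, rfl, rfl⟩
  constructor
  · rcases (hS (G.fst e₀) x).or_exists_from_mem fun a b h => (hstep a b h).imp_right And.right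
      with h | h
    exacts [⟨_, Or.inl rfl, h⟩, h]
  · rcases (hS x (G.fst e₀)).or_exists_to_mem fun a b h => (hstep a b h).imp_right And.left
      with h | h
    exacts [⟨_, Or.inl rfl, h⟩, h]

theorem exists_reflTransGen_avoiding {B : Set (E × Bool)} (hB : ∀ e, ∃ b, (e, b) ∈ B)
    (hS : ∀ u v, ReflTransGen (G.arcRel B) u v) {e₀ : E}
    (he₀ : ∀ u v, ReflTransGen (G.adjIn {e | e ≠ e₀}) u v) :
    ∃ b, ReflTransGen (G.arcRel {p ∈ B | p.1 ≠ e₀}) (G.head (e₀, b)) (G.tail (e₀, b)) := by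
  set R := G.arcRel {p ∈ B | p.1 ≠ e₀}
  set u := G.fst e₀
  set v := G.snd e₀
  have hfrom : ∀ x, ReflTransGen R v x ∨ ReflTransGen R u x := fun x => by
    obtain ⟨t, rfl | rfl, h⟩ := (exists_endpoint_reflTransGen_avoiding hS e₀ x).1
    exacts [Or.inr h, Or.inl h]
  have hto : ∀ x, ReflTransGen R x u ∨ ReflTransGen R x v := fun x => by
    obtain ⟨t, rfl | rfl, h⟩ := (exists_endpoint_reflTransGen_avoiding hS e₀ x).2
    exacts [Or.inl h, Or.inr h]
  -- Otherwise the vertices reachable from `v` are exactly those reaching `v`, so they form a set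
  -- closed under all edges but `e₀` that misses `u`: `e₀` would be a bridge.
  by_contra! hno
  have hvu : ¬ ReflTransGen R v u := hno true
  have huv : ¬ ReflTransGen R u v := hno false
  have hback : ∀ x, ReflTransGen R v x → ReflTransGen R x v := fun x h =>
    (hto x).resolve_left fun hxu => hvu (h.trans hxu)
  have hforth : ∀ x, ReflTransGen R x v → ReflTransGen R v x := fun x h =>
    (hfrom x).resolve_right fun hux => huv (hux.trans h)
  have hclosed : ∀ x y, G.adjIn {e | e ≠ e₀} x y → ReflTransGen R v x → ReflTransGen R v y := by
    intro x y hxy hvx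
    obtain ⟨⟨g, b⟩, hg, rfl, rfl⟩ := adjIn_iff.mp hxy
    obtain ⟨b', hb'⟩ := hB g
    rcases Bool.eq_or_eq_not b' b with rfl | rfl
    · exact hvx.tail ⟨_, ⟨hb', hg⟩, rfl, rfl⟩
    · exact hforth _ (.head ⟨_, ⟨hb', hg⟩, by simp, by simp⟩ (hback _ hvx))
  have hreach : ∀ x, ReflTransGen (G.adjIn {e | e ≠ e₀}) v x → ReflTransGen R v x := by
    intro x hx
    induction hx with
    | refl => exact .refl
    | tail _ hxy ih => exact hclosed _ _ hxy ih
  exact hvu (hreach u (he₀ v u))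

theorem reflTransGen_arcRel_sep_reachable {C : Set (E × Bool)} {x a w : V}
    (hxa : ReflTransGen (G.arcRel C) x a) (haw : ReflTransGen (G.arcRel C) a w) :
    ReflTransGen (G.arcRel {p ∈ C | ReflTransGen (G.arcRel C) x (G.tail p)}) a w := by
  induction haw with
  | refl => exact .refl
  | tail hac hcd ih =>
    obtain ⟨p, hp, rfl, rfl⟩ := hcd
    exact ih.tail ⟨p, ⟨hp, hxa.trans hac⟩, rfl, rfl⟩

/-- A walk from `x` to `z` can be pruned to one (with arc set `C`) that never traverses an edge
in both directions. -/
theorem exists_injOn_fst_support {B : Set (E × Bool)} {x z : V}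
    (h : ReflTransGen (G.arcRel B) x z) :
    ∃ C ⊆ B, InjOn Prod.fst C ∧ ReflTransGen (G.arcRel C) x z ∧
      ∀ p ∈ C, ReflTransGen (G.arcRel C) x (G.tail p) ∧ ReflTransGen (G.arcRel C) (G.head p) z := by
  induction h using ReflTransGen.head_induction_on with
  | refl => exact ⟨∅, empty_subset _, injOn_empty _, .refl, by simp⟩
  | head hxy _ ih =>
    obtain ⟨q, hqB, rfl, rfl⟩ := hxy
    obtain ⟨C, hCB, hinj, hz, hC⟩ := ih
    by_cases hrev : (q.1, !q.2) ∈ C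
    · -- the walk comes back to `tail q`: keep only the part after that
      have hqz : ReflTransGen (G.arcRel C) (G.tail q) z := by simpa using (hC _ hrev).2
      refine ⟨_, fun p hp => hCB hp.1, hinj.mono (sep_subset _ _),
        reflTransGen_arcRel_sep_reachable .refl hqz, fun p hp => ⟨?_, ?_⟩⟩
      · exact reflTransGen_arcRel_sep_reachable .refl hp.2
      · exact reflTransGen_arcRel_sep_reachable (hp.2.tail ⟨p, hp.1, rfl, rfl⟩) (hC p hp.1).2
    · have hq : G.arcRel (insert q C) (G.tail q) (G.head q) := ⟨q, mem_insert _ _, rfl, rfl⟩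
      refine ⟨insert q C, insert_subset hqB hCB, hinj.fst_insert hrev,
        .head hq (reflTransGen_arcRel_mono (subset_insert _ _) hz), ?_⟩
      rintro p (rfl | hp)
      · exact ⟨.refl, reflTransGen_arcRel_mono (subset_insert _ _) hz⟩
      · exact ⟨.head hq (reflTransGen_arcRel_mono (subset_insert _ _) (hC p hp).1),
          reflTransGen_arcRel_mono (subset_insert _ _) (hC p hp).2⟩

variable (G) in
theorem isAdmissible_baseArcs : G.IsAdmissible G.baseArcs where
  baseArcs_subset := subset_rfl
  injOn_fst := by
    rintro ⟨e, b⟩ ⟨-, rfl⟩ ⟨e', b'⟩ ⟨-, rfl⟩ (rfl : e = e')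
    rfl
  reflTransGen_head_tail p hp hpd := absurd hp.1 hpd

theorem isAdmissible_sUnion {c : Set (Set (E × Bool))} (hc : ∀ A ∈ c, G.IsAdmissible A)
    (hchain : IsChain (· ⊆ ·) c) (hne : c.Nonempty) : G.IsAdmissible (⋃₀ c) where
  baseArcs_subset :=
    let ⟨A, hA⟩ := hne
    (hc A hA).baseArcs_subset.trans (subset_sUnion_of_mem hA)
  injOn_fst := by
    rintro p ⟨A, hA, hp⟩ q ⟨B, hB, hq⟩
    rcases hchain.total hA hB with h | h
    · exact (hc B hB).injOn_fst (h hp) hq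
    · exact (hc A hA).injOn_fst hp (h hq)
  reflTransGen_head_tail := by
    rintro p ⟨A, hA, hp⟩ hpd
    exact reflTransGen_arcRel_mono (subset_sUnion_of_mem hA)
      ((hc A hA).reflTransGen_head_tail p hp hpd)

variable (G) in
theorem exists_maximal_isAdmissible : ∃ A, Maximal G.IsAdmissible A := by
  obtain ⟨A, -, hA⟩ := zorn_subset_nonempty {A | G.IsAdmissible A}
    (fun c hc hchain hne => ⟨⋃₀ c, isAdmissible_sUnion hc hchain hne,
      fun _ => subset_sUnion_of_mem⟩) _ G.isAdmissible_baseArcs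
  exact ⟨A, hA⟩

namespace IsAdmissible

variable {A : Set (E × Bool)}

theorem reflTransGen_mixedArcs (hA : G.IsAdmissible A) {u v : V}
    (h : ReflTransGen (G.arcRel (mixedArcs G.baseArcs)) u v) :
    ReflTransGen (G.arcRel (mixedArcs A)) u v := by
  refine ReflTransGen.lift' id (fun u v ⟨p, hp, hu, hv⟩ => ?_) _ _ h
  subst hu hv
  obtain ⟨e, b⟩ := p
  rcases hp with hp | hp
  · exact .single ⟨_, Or.inl (hA.baseArcs_subset hp), rfl, rfl⟩
  by_cases hA' : ∃ b', (e, b') ∈ A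
  · obtain ⟨b', hb'⟩ := hA'
    rcases Bool.eq_or_eq_not b' b with rfl | rfl
    · exact .single ⟨_, Or.inl hb', rfl, rfl⟩
    · have hret := hA.reflTransGen_head_tail _ hb' fun he => hp true ⟨he, rfl⟩
      simp only [head_not, tail_not] at hret
      exact reflTransGen_arcRel_mono (subset_mixedArcs A) hret
  · exact .single ⟨_, Or.inr (not_exists.mp hA'), rfl, rfl⟩

theorem union (hA : G.IsAdmissible A) {D : Set (E × Bool)} (hDA : D ⊆ mixedArcs A)
    (hD : InjOn Prod.fst D) (hret : ∀ p ∈ D, ReflTransGen (G.arcRel D) (G.head p) (G.tail p)) :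
    G.IsAdmissible (A ∪ D) where
  baseArcs_subset := hA.baseArcs_subset.trans subset_union_left
  injOn_fst := by
    have key : ∀ p ∈ A, ∀ q ∈ D, p.1 = q.1 → p = q := fun p hp q hq h =>
      (hDA hq).elim (hA.injOn_fst hp · h) fun hq' => absurd (h ▸ hp) (hq' p.2)
    rintro p (hp | hp) q (hq | hq) h
    · exact hA.injOn_fst hp hq h
    · exact key p hp q hq h
    · exact (key q hq p hp h.symm).symm
    · exact hD hp hq h
  reflTransGen_head_tail p hp hpd := hp.elim
    (fun hp => reflTransGen_arcRel_mono subset_union_left (hA.reflTransGen_head_tail p hp hpd))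
    (fun hp => reflTransGen_arcRel_mono subset_union_right (hret p hp))

theorem exists_extension (hA : G.IsAdmissible A)
    (hS : ∀ u v, ReflTransGen (G.arcRel (mixedArcs A)) u v) {e : E}
    (he : ∀ u v, ReflTransGen (G.adjIn {e' | e' ≠ e}) u v) (heA : ∀ b, (e, b) ∉ A) :
    ∃ A', G.IsAdmissible A' ∧ A ⊆ A' ∧ ∃ b, (e, b) ∈ A' := by
  obtain ⟨b, hb⟩ := exists_reflTransGen_avoiding (exists_mem_mixedArcs A) hS he
  obtain ⟨C, hCB, hinj, hbC, hC⟩ := exists_injOn_fst_support hb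
  have hCD : C ⊆ insert (e, b) C := subset_insert _ _
  have heb : G.arcRel (insert (e, b) C) (G.tail (e, b)) (G.head (e, b)) :=
    ⟨_, mem_insert _ _, rfl, rfl⟩
  refine ⟨A ∪ insert (e, b) C, hA.union ?_ ?_ ?_, subset_union_left, b, Or.inr (mem_insert _ _)⟩
  · exact insert_subset (Or.inr heA) fun p hp => (hCB hp).1
  · exact hinj.fst_insert fun h => (hCB h).2 rfl
  · rintro p (rfl | hp)
    · exact reflTransGen_arcRel_mono hCD hbC
    · exact ((reflTransGen_arcRel_mono hCD (hC p hp).2).tail heb).trans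
        (reflTransGen_arcRel_mono hCD (hC p hp).1)

theorem exists_strongConn_orientation (hA : G.IsAdmissible A) (htotal : ∀ e, ∃ b, (e, b) ∈ A)
    (hS : ∀ u v, ReflTransGen (G.arcRel (mixedArcs A)) u v) :
    ∃ o : E → Bool, G.IsOrientation o ∧ G.StrongConn o := by
  choose o ho using htotal
  have hAo : ∀ p ∈ A, o p.1 = p.2 := fun p hp => congrArg Prod.snd (hA.injOn_fst (ho p.1) hp rfl)
  refine ⟨o, fun e he => hAo _ (hA.baseArcs_subset (show (e, true) ∈ G.baseArcs from ⟨he, rfl⟩)), fun u v => ?_⟩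
  refine ReflTransGen.mono (fun a b ⟨p, hp, ha, hb⟩ => step_iff.mpr ⟨p, hAo p ?_, ha, hb⟩) _ _
    (hS u v)
  exact hp.resolve_right fun h => h (o p.1) (ho p.1)

end IsAdmissible

end MixedGraph

/-- Let `G` be a 2-edge-connected mixed graph.  Then the undirected edges of
`G` can be oriented so that the resulting digraph is strongly connected if and
only if the digraph obtained from `G` by contracting all undirected edges is
strongly connected. -/
theorem mixedGraph_strongly_connected_orientation_iff_contraction
    {V E : Type*} (G : MixedGraph V E) (h2 : G.TwoEdgeConnected) :
    (∃ o : E → Bool, G.IsOrientation o ∧ G.StrongConn o) ↔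
      ∀ x y : Quot G.undirRel, Relation.ReflTransGen G.contractedStep x y := by
  refine ⟨fun ⟨o, ho, hs⟩ => G.reflTransGen_contractedStep_of_strongConn ho hs, fun hc => ?_⟩
  obtain ⟨A, hA⟩ := G.exists_maximal_isAdmissible
  have hS : ∀ u v, ReflTransGen (G.arcRel (MixedGraph.mixedArcs A)) u v := fun u v =>
    hA.prop.reflTransGen_mixedArcs (G.reflTransGen_mixedArcs_baseArcs hc u v)
  refine hA.prop.exists_strongConn_orientation (fun e => ?_) hS
  by_contra! heA
  obtain ⟨A', hA', hAA', b, hb⟩ := hA.prop.exists_extension hS (h2.2 e) heA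
  exact heA b (hA.2 hA' hAA' hb)
end

section
/- Let G = (V,E) be a mixed graph. The undirected edges of G can be oriented so as to obtain a strongly connected digraph if and only if G is 2-edge-connected and there is no nonempty proper subset U of V such that every edge in the cut δ(U) is directed and oriented from U to V∖U. -/
/-
Necessity: a strongly connected orientation has no directed cut, and an edge `e` oriented `u → v`
is bridged in `G - e` by a directed walk from `v` back to `u`, since such a walk can use `e` only
to return to `v`.

Sufficiency: by Zorn's lemma take a maximal partial orientation that keeps the directed edges and
in which every newly oriented edge lies on a closed directed walk. It leaves the mixed graph
strongly connected, as a vertex set that no usable arc leaves would give a directed cut. A free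
edge `e` can be oriented so that its tail is reachable from its head: otherwise the two sets
reachable from the heads of its two arcs uncross into a partition of the vertices crossed only
by `e`, a bridge. Fixing `e` with such a walk, used in one direction per edge, extends the
partial orientation, so the maximal one orients every edge.
-/

namespace MixedGraph

variable {V E : Type*} (G : MixedGraph V E)

/- An arc `(e, d) : E × Bool` is the edge `e` traversed from `fst e` to `snd e` if `d = true` and
backwards otherwise, so that an orientation `o` is the set of arcs `(e, o e)`. -/

def src (a : E × Bool) : V := bif a.2 then G.fst a.1 else G.snd a.1

def tgt (a : E × Bool) : V := bif a.2 then G.snd a.1 else G.fst a.1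

def rev (a : E × Bool) : E × Bool := (a.1, !a.2)

section Arcs

variable {e : E} {a : E × Bool}

@[simp] lemma src_true : G.src (e, true) = G.fst e := rfl
@[simp] lemma src_false : G.src (e, false) = G.snd e := rfl
@[simp] lemma tgt_true : G.tgt (e, true) = G.snd e := rfl
@[simp] lemma tgt_false : G.tgt (e, false) = G.fst e := rfl

@[simp] lemma rev_rev : rev (rev a) = a := by simp [rev]

lemma rev_ne : rev a ≠ a := by simp [rev, Prod.ext_iff]

@[simp] lemma src_rev : G.src (rev a) = G.tgt a := by cases a with | mk e d => cases d <;> rfl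
@[simp] lemma tgt_rev : G.tgt (rev a) = G.src a := by cases a with | mk e d => cases d <;> rfl

lemma xor_mem_iff_exists_arc {X : Set V} :
    Xor (G.fst e ∈ X) (G.snd e ∈ X) ↔ ∃ d, G.src (e, d) ∈ X ∧ G.tgt (e, d) ∉ X := by
  simp only [xor_def, Bool.exists_bool, src_true, src_false, tgt_true, tgt_false]
  tauto

end Arcs

def arcAdj (P : Set (E × Bool)) (u v : V) : Prop := ∃ a ∈ P, G.src a = u ∧ G.tgt a = v

lemma arcAdj_mono {P Q : Set (E × Bool)} (h : P ⊆ Q) : G.arcAdj P ≤ G.arcAdj Q :=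
  fun _ _ ⟨a, ha, hu, hv⟩ => ⟨a, h ha, hu, hv⟩

lemma step_eq (o : E → Bool) : G.step o = G.arcAdj {a | o a.1 = a.2} := by
  ext u v
  constructor
  · rintro ⟨e, ⟨ho, hu, hv⟩ | ⟨ho, hu, hv⟩⟩
    exacts [⟨(e, true), ho, hu, hv⟩, ⟨(e, false), ho, hu, hv⟩]
  · rintro ⟨⟨e, _ | _⟩, ho, hu, hv⟩
    exacts [⟨e, Or.inr ⟨ho, hu, hv⟩⟩, ⟨e, Or.inl ⟨ho, hu, hv⟩⟩]

lemma adjIn_eq (S : Set E) : G.adjIn S = G.arcAdj {a | a.1 ∈ S} := by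
  ext u v
  constructor
  · rintro ⟨e, he, ⟨hu, hv⟩ | ⟨hv, hu⟩⟩
    exacts [⟨(e, true), he, hu, hv⟩, ⟨(e, false), he, hu, hv⟩]
  · rintro ⟨⟨e, _ | _⟩, he, hu, hv⟩
    exacts [⟨e, he, Or.inr ⟨hv, hu⟩⟩, ⟨e, he, Or.inl ⟨hu, hv⟩⟩]

instance (S : Set E) : Std.Symm (G.adjIn S) := ⟨fun _ _ ⟨e, he, h⟩ => ⟨e, he, h.symm⟩⟩

def IsOutClosed (P : Set (E × Bool)) (X : Set V) : Prop :=
  ∀ a ∈ P, G.src a ∈ X → G.tgt a ∈ X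

section OutClosed

variable {G} {P Q : Set (E × Bool)} {X : Set V} {u v : V}

lemma IsOutClosed.mono (hX : G.IsOutClosed Q X) (h : P ⊆ Q) : G.IsOutClosed P X :=
  fun a ha => hX a (h ha)

lemma IsOutClosed.mem_of_reflTransGen (hX : G.IsOutClosed P X)
    (h : Relation.ReflTransGen (G.arcAdj P) u v) (hu : u ∈ X) : v ∈ X := by
  induction h with
  | refl => exact hu
  | tail _ hstep ih =>
    obtain ⟨a, ha, rfl, rfl⟩ := hstep
    exact hX a ha ih

lemma exists_arc_leaving (h : Relation.ReflTransGen (G.arcAdj P) u v) (hu : u ∈ X)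
    (hv : v ∉ X) : ∃ a ∈ P, G.src a ∈ X ∧ G.tgt a ∉ X := by
  by_contra! hX
  exact hv ((show G.IsOutClosed P X from hX).mem_of_reflTransGen h hu)

lemma isOutClosed_reflTransGen :
    G.IsOutClosed P {v | Relation.ReflTransGen (G.arcAdj P) u v} :=
  fun a ha hu => Relation.ReflTransGen.tail hu ⟨a, ha, rfl, rfl⟩

end OutClosed

def IsDirectedCut (U : Set V) : Prop :=
  ∀ e : E, Xor (G.fst e ∈ U) (G.snd e ∈ U) →
    e ∈ G.directed ∧ G.fst e ∈ U ∧ G.snd e ∉ U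

section Necessity

variable {G} {o : E → Bool}

theorem not_isDirectedCut_of_strongConn (ho : G.IsOrientation o) (hs : G.StrongConn o)
    {U : Set V} (hne : U.Nonempty) (hU : U ≠ Set.univ) : ¬ G.IsDirectedCut U := by
  intro hcut
  obtain ⟨u, hu⟩ := hne
  obtain ⟨v, hv⟩ := Set.ne_univ_iff_exists_notMem U |>.1 hU
  obtain ⟨⟨e, d⟩, hd, hsrc, htgt⟩ :=
    exists_arc_leaving (X := Uᶜ) (G.step_eq o ▸ hs v u) hv (not_not.2 hu)
  obtain ⟨hdir, hfst, -⟩ := hcut e <| G.xor_mem_iff_exists_arc.2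
    ⟨!d, show G.src (rev (e, d)) ∈ U by simpa using htgt,
      show G.tgt (rev (e, d)) ∉ U by simpa using hsrc⟩
  obtain rfl : d = true := (hd : o e = d).symm.trans (ho e hdir)
  exact hsrc hfst

theorem reflTransGen_adjIn_ne_of_strongConn (hs : G.StrongConn o) (e : E) (u v : V) :
    Relation.ReflTransGen (G.adjIn {e' | e' ≠ e}) u v := by
  have hhead : ∀ w, Relation.ReflTransGen (G.adjIn {e' | e' ≠ e}) (G.tgt (e, o e)) w := by
    intro w
    induction G.step_eq o ▸ hs (G.tgt (e, o e)) w with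
    | refl => rfl
    | tail _ hstep ih =>
      obtain ⟨⟨f, d⟩, hd, rfl, rfl⟩ := hstep
      by_cases hfe : f = e
      · subst hfe
        rw [show o f = d from hd]
      · exact ih.tail (G.adjIn_eq _ ▸ ⟨(f, d), hfe, rfl, rfl⟩)
  exact (Std.Symm.symm _ _ (hhead u)).trans (hhead v)

theorem twoEdgeConnected_of_strongConn (hs : G.StrongConn o) : G.TwoEdgeConnected := by
  refine ⟨fun u v => ?_, G.reflTransGen_adjIn_ne_of_strongConn hs⟩
  rw [adjIn_eq]
  exact Relation.ReflTransGen.mono (G.arcAdj_mono fun _ _ => trivial) _ _ (G.step_eq o ▸ hs u v)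

end Necessity

def IsWalk : V → List (E × Bool) → V → Prop
  | u, [], v => u = v
  | u, a :: l, v => G.src a = u ∧ IsWalk (G.tgt a) l v

section Walks

variable {G} {P : Set (E × Bool)} {u v : V} {a : E × Bool} {l l₁ l₂ l₃ : List (E × Bool)}

@[simp] lemma isWalk_nil : G.IsWalk u [] v ↔ u = v := Iff.rfl

@[simp] lemma isWalk_cons : G.IsWalk u (a :: l) v ↔ G.src a = u ∧ G.IsWalk (G.tgt a) l v := by
  rw [IsWalk]

lemma isWalk_append :
    G.IsWalk u (l₁ ++ l₂) v ↔ ∃ w, G.IsWalk u l₁ w ∧ G.IsWalk w l₂ v := by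
  induction l₁ generalizing u with
  | nil => simp
  | cons a l ih => simp [ih, and_assoc]

lemma IsWalk.reflTransGen (h : G.IsWalk u l v) (hl : ∀ a ∈ l, a ∈ P) :
    Relation.ReflTransGen (G.arcAdj P) u v := by
  induction l generalizing u with
  | nil => exact (isWalk_nil.1 h) ▸ .refl
  | cons a l ih =>
    obtain ⟨rfl, h⟩ := h
    exact .head ⟨a, hl a (by simp), rfl, rfl⟩ (ih h fun b hb => hl b (by simp [hb]))

lemma exists_isWalk_of_reflTransGen (h : Relation.ReflTransGen (G.arcAdj P) u v) :
    ∃ l, G.IsWalk u l v ∧ ∀ a ∈ l, a ∈ P := by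
  induction h with
  | refl => exact ⟨[], rfl, by simp⟩
  | tail _ hstep ih =>
    obtain ⟨l, hl, hlP⟩ := ih
    obtain ⟨a, ha, hsrc, rfl⟩ := hstep
    exact ⟨l ++ [a], isWalk_append.2 ⟨_, hl, by simpa using hsrc⟩, by
      simp only [List.mem_append, List.mem_singleton]
      rintro b (hb | rfl)
      exacts [hlP b hb, ha]⟩

lemma IsWalk.reflTransGen_tgt_src (h : G.IsWalk u l u) (ha : a ∈ l) (hl : ∀ b ∈ l, b ∈ P) :
    Relation.ReflTransGen (G.arcAdj P) (G.tgt a) (G.src a) := by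
  obtain ⟨l₁, l₂, rfl⟩ := List.append_of_mem ha
  obtain ⟨w, h₁, rfl, h₂⟩ := isWalk_append.1 h
  exact (h₂.reflTransGen fun b hb => hl b (by simp [hb])).trans
    (h₁.reflTransGen fun b hb => hl b (by simp [hb]))

lemma IsWalk.cancel_rev (h : G.IsWalk u (l₁ ++ a :: (l₂ ++ rev a :: l₃)) v) :
    G.IsWalk u (l₁ ++ l₃) v := by
  obtain ⟨w, h₁, rfl, h₂⟩ := isWalk_append.1 h
  obtain ⟨_, _, _, h₃⟩ := isWalk_append.1 h₂
  exact isWalk_append.2 ⟨_, h₁, by simpa using h₃⟩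

lemma IsWalk.exists_sublist_rev_free (h : G.IsWalk u l v) :
    ∃ l' ⊆ l, G.IsWalk u l' v ∧ ∀ a ∈ l', rev a ∉ l' := by
  induction hn : l.length using Nat.strong_induction_on generalizing l with
  | _ n ih =>
  by_cases hfree : ∀ a ∈ l, rev a ∉ l
  · exact ⟨l, List.Subset.refl l, h, hfree⟩
  push Not at hfree
  obtain ⟨a, ha, hra⟩ := hfree
  obtain ⟨c, l₁, l₂, l₃, rfl⟩ :
      ∃ c l₁ l₂ l₃, l = l₁ ++ c :: (l₂ ++ rev c :: l₃) := by
    obtain ⟨s, t, rfl⟩ := List.append_of_mem ha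
    rcases List.mem_append.1 hra with hs | ht
    · obtain ⟨s₁, s₂, rfl⟩ := List.append_of_mem hs
      exact ⟨rev a, s₁, s₂, t, by simp⟩
    · obtain ⟨t₁, t₂, rfl⟩ := List.append_of_mem (List.mem_of_ne_of_mem rev_ne ht)
      exact ⟨a, s, t₁, t₂, rfl⟩
  obtain ⟨l', hsub, hl', hfree'⟩ := ih _ (by simp at hn ⊢; omega) h.cancel_rev rfl
  exact ⟨l', List.Subset.trans hsub fun x hx => by simp at hx ⊢; tauto, hl', hfree'⟩

end Walks

/-- The arcs still usable once the arcs of `M` are fixed: an edge that `M` does not orient is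
usable both ways, and `M ⊆ avail M` says that `M` orients no edge both ways. -/
def avail (M : Set (E × Bool)) : Set (E × Bool) := {a | rev a ∉ M}

lemma mem_avail_insert {a b : E × Bool} {M : Set (E × Bool)} :
    a ∈ avail (insert b M) ↔ rev a ≠ b ∧ a ∈ avail M := by
  simp [avail]

/-- The invariant of the Zorn argument; closed walks are finite, so it passes to unions of
chains. -/
structure IsCyclicPartialOrientation (M : Set (E × Bool)) : Prop where
  directed_mem : ∀ e ∈ G.directed, (e, true) ∈ M
  subset_avail : M ⊆ avail M
  reflTransGen_tgt_src :
    ∀ a ∈ M, a.1 ∉ G.directed → Relation.ReflTransGen (G.arcAdj M) (G.tgt a) (G.src a)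

lemma mem_avail_insert_of_fst_ne {a b : E × Bool} {M : Set (E × Bool)} (ha : a ∈ avail M)
    (hab : a.1 ≠ b.1) : a ∈ avail (insert b M) :=
  mem_avail_insert.2 ⟨fun h => hab (by rw [← h]; rfl), ha⟩

section Sufficiency

variable {G} {M : Set (E × Bool)}

/-- An edge between `X` and `Xᶜ` can only be fixed into `X` by an arc of `M`; were the edge
undirected, the closed walk through that arc would have to leave `X` again. -/
lemma IsCyclicPartialOrientation.isDirectedCut_compl (hM : G.IsCyclicPartialOrientation M)
    {X : Set V} (hX : G.IsOutClosed (avail M) X) : G.IsDirectedCut Xᶜ := by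
  intro e he
  obtain ⟨d, hsrc, htgt⟩ := G.xor_mem_iff_exists_arc.1 (xor_not_not.1 he)
  have hrev : rev (e, d) ∈ M := by
    by_contra h
    exact htgt (hX _ h hsrc)
  by_cases hdir : e ∈ G.directed
  · obtain rfl : d = false := by
      by_contra hd
      rw [Bool.not_eq_false] at hd
      subst hd
      exact hM.subset_avail (hM.directed_mem e hdir) hrev
    exact ⟨hdir, htgt, not_not.2 hsrc⟩
  · have hcycle := hM.reflTransGen_tgt_src _ hrev hdir
    rw [tgt_rev, src_rev] at hcycle
    exact absurd ((hX.mono hM.subset_avail).mem_of_reflTransGen hcycle hsrc) htgt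

lemma IsCyclicPartialOrientation.eq_univ_of_isOutClosed (hM : G.IsCyclicPartialOrientation M)
    (hcut : ∀ U : Set V, U.Nonempty → U ≠ Set.univ → ¬ G.IsDirectedCut U)
    {X : Set V} (hX : G.IsOutClosed (avail M) X) (hne : X.Nonempty) : X = Set.univ := by
  by_contra hU
  exact hcut Xᶜ (Set.nonempty_compl.2 hU) (Set.compl_ne_univ.2 hne) (hM.isDirectedCut_compl hX)

lemma IsCyclicPartialOrientation.reflTransGen_avail (hM : G.IsCyclicPartialOrientation M)
    (hcut : ∀ U : Set V, U.Nonempty → U ≠ Set.univ → ¬ G.IsDirectedCut U) (u v : V) :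
    Relation.ReflTransGen (G.arcAdj (avail M)) u v := by
  have := hM.eq_univ_of_isOutClosed hcut isOutClosed_reflTransGen ⟨u, .refl⟩
  exact (Set.eq_univ_iff_forall.1 this v : _)

/-- Uncrossing: only `(e, false)` can leave `X` and only `(e, true)` can leave `Y`, and neither
leaves `X ∩ Y` or `X ∪ Y`, so these two sets are trivial. -/
lemma IsCyclicPartialOrientation.eq_compl_of_isOutClosed_insert
    (hM : G.IsCyclicPartialOrientation M)
    (hcut : ∀ U : Set V, U.Nonempty → U ≠ Set.univ → ¬ G.IsDirectedCut U)
    {e : E} {X Y : Set V}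
    (hX : G.IsOutClosed (avail (insert (e, true) M)) X)
    (hY : G.IsOutClosed (avail (insert (e, false) M)) Y)
    (hxX : G.fst e ∉ X) (hyX : G.snd e ∈ X) (hxY : G.fst e ∈ Y) (hyY : G.snd e ∉ Y) :
    Y = Xᶜ := by
  have hinter : X ∩ Y = ∅ := by
    by_contra hne
    have huniv := hM.eq_univ_of_isOutClosed hcut ?_ (Set.nonempty_iff_ne_empty.2 hne)
    · exact hxX (huniv ▸ Set.mem_univ _ : G.fst e ∈ X ∩ Y).1
    rintro ⟨f, d⟩ ha ⟨haX, haY⟩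
    by_cases hfe : f = e
    · subst hfe
      cases d
      exacts [absurd haY hyY, absurd haX hxX]
    · exact ⟨hX _ (mem_avail_insert_of_fst_ne ha hfe) haX,
        hY _ (mem_avail_insert_of_fst_ne ha hfe) haY⟩
  have hunion : X ∪ Y = Set.univ := by
    refine hM.eq_univ_of_isOutClosed hcut ?_ ⟨_, Or.inl hyX⟩
    rintro ⟨f, d⟩ ha hsrc
    by_cases hfe : f = e
    · subst hfe
      cases d
      exacts [Or.inr hxY, Or.inl hyX]
    · exact hsrc.imp (hX _ (mem_avail_insert_of_fst_ne ha hfe))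
        (hY _ (mem_avail_insert_of_fst_ne ha hfe))
  exact (IsCompl.of_eq hinter hunion).compl_eq.symm

lemma IsCyclicPartialOrientation.exists_reflTransGen_insert (hM : G.IsCyclicPartialOrientation M)
    (hcut : ∀ U : Set V, U.Nonempty → U ≠ Set.univ → ¬ G.IsDirectedCut U)
    (hbr : ∀ e, Relation.ReflTransGen (G.adjIn {e' | e' ≠ e}) (G.fst e) (G.snd e)) (e : E) :
    ∃ d, Relation.ReflTransGen (G.arcAdj (avail (insert (e, d) M)))
      (G.tgt (e, d)) (G.src (e, d)) := by
  by_contra! h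
  set X := {w | Relation.ReflTransGen (G.arcAdj (avail (insert (e, true) M))) (G.snd e) w}
  set Y := {w | Relation.ReflTransGen (G.arcAdj (avail (insert (e, false) M))) (G.fst e) w}
  have hX : G.IsOutClosed (avail (insert (e, true) M)) X := isOutClosed_reflTransGen
  have hY : G.IsOutClosed (avail (insert (e, false) M)) Y := isOutClosed_reflTransGen
  have hYX : Y = Xᶜ := hM.eq_compl_of_isOutClosed_insert hcut hX hY (h true) .refl .refl (h false)
  obtain ⟨c, hce, hsrc, htgt⟩ :=
    exists_arc_leaving (X := Xᶜ) (G.adjIn_eq _ ▸ hbr e) (h true) (not_not.2 .refl)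
  by_cases hc : c ∈ avail M
  · exact htgt (hYX ▸ hY c (mem_avail_insert_of_fst_ne hc hce) (hYX ▸ hsrc))
  · have hrc : rev c ∈ avail (insert (e, true) M) :=
      mem_avail_insert_of_fst_ne (hM.subset_avail (not_not.1 hc)) hce
    exact hsrc (by simpa using hX _ hrc (by simpa using not_not.1 htgt))

/-- Fixing `b` together with a walk closing it up, cut down so that it uses no edge in both
directions, keeps the invariant. -/
lemma IsCyclicPartialOrientation.exists_superset_insert (hM : G.IsCyclicPartialOrientation M)
    {b : E × Bool} (hb : rev b ∉ M)
    (h : Relation.ReflTransGen (G.arcAdj (avail (insert b M))) (G.tgt b) (G.src b)) :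
    ∃ M', G.IsCyclicPartialOrientation M' ∧ insert b M ⊆ M' := by
  obtain ⟨l₀, hl₀, hl₀N⟩ := exists_isWalk_of_reflTransGen h
  obtain ⟨l, hsub, hl, hfree⟩ := hl₀.exists_sublist_rev_free
  have hN : insert b M ⊆ avail (insert b M) := by
    rintro a (rfl | ha) (hra | hra)
    · exact rev_ne hra
    · exact hb hra
    · exact hb (by rw [← hra, rev_rev]; exact ha)
    · exact hM.subset_avail ha hra
  have hcycle : G.IsWalk (G.src b) (b :: l) (G.src b) := ⟨rfl, hl⟩
  have hcycle_mem : ∀ a ∈ b :: l, a ∈ insert b M ∪ {a | a ∈ l} := by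
    rintro a (_ | ⟨_, ha⟩)
    exacts [Or.inl (Set.mem_insert _ _), Or.inr ha]
  refine ⟨insert b M ∪ {a | a ∈ l}, ⟨?_, ?_, ?_⟩, Set.subset_union_left⟩
  · exact fun e he => Or.inl (Or.inr (hM.directed_mem e he))
  · rintro a (ha | ha) (hra | hra)
    · exact hN ha hra
    · exact hl₀N _ (hsub hra) (by rwa [rev_rev])
    · exact hl₀N a (hsub ha) hra
    · exact hfree a ha hra
  · rintro a ((rfl | ha) | ha) hdir
    · exact hcycle.reflTransGen_tgt_src (List.mem_cons_self ..) hcycle_mem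
    · exact Relation.ReflTransGen.mono (G.arcAdj_mono fun _ hx => Or.inl (Or.inr hx)) _ _
        (hM.reflTransGen_tgt_src a ha hdir)
    · exact hcycle.reflTransGen_tgt_src (List.mem_cons_of_mem _ ha) hcycle_mem

lemma isCyclicPartialOrientation_sUnion {c : Set (Set (E × Bool))}
    (hc : ∀ M ∈ c, G.IsCyclicPartialOrientation M) (hchain : IsChain (· ⊆ ·) c)
    (hne : c.Nonempty) : G.IsCyclicPartialOrientation (⋃₀ c) where
  directed_mem e he := ⟨hne.some, hne.some_mem, (hc _ hne.some_mem).directed_mem e he⟩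
  subset_avail := by
    rintro a ⟨M₁, hM₁, ha⟩ ⟨M₂, hM₂, hra⟩
    rcases hchain.total hM₁ hM₂ with h | h
    exacts [(hc M₂ hM₂).subset_avail (h ha) hra, (hc M₁ hM₁).subset_avail ha (h hra)]
  reflTransGen_tgt_src := by
    rintro a ⟨M, hM, ha⟩ hdir
    exact Relation.ReflTransGen.mono (G.arcAdj_mono (Set.subset_sUnion_of_mem hM)) _ _
      ((hc M hM).reflTransGen_tgt_src a ha hdir)

theorem exists_isCyclicPartialOrientation_total
    (hcut : ∀ U : Set V, U.Nonempty → U ≠ Set.univ → ¬ G.IsDirectedCut U)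
    (hbr : ∀ e, Relation.ReflTransGen (G.adjIn {e' | e' ≠ e}) (G.fst e) (G.snd e)) :
    ∃ M, G.IsCyclicPartialOrientation M ∧ ∀ e, (e, true) ∈ M ∨ (e, false) ∈ M := by
  have hinit : G.IsCyclicPartialOrientation {a | a.1 ∈ G.directed ∧ a.2 = true} :=
    ⟨fun e he => ⟨he, rfl⟩, fun _ ha hra => absurd hra.2 (by simp [rev, ha.2]),
      fun _ ha hdir => absurd ha.1 hdir⟩
  obtain ⟨M, -, hmax⟩ := zorn_subset_nonempty {M | G.IsCyclicPartialOrientation M}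
    (fun c hc hchain hne => ⟨_, isCyclicPartialOrientation_sUnion hc hchain hne,
      fun _ => Set.subset_sUnion_of_mem⟩) _ hinit
  refine ⟨M, hmax.prop, fun e => ?_⟩
  by_contra! h
  obtain ⟨d, hd⟩ := hmax.prop.exists_reflTransGen_insert hcut hbr e
  obtain ⟨M', hM', hsub⟩ :=
    hmax.prop.exists_superset_insert (b := (e, d)) (by cases d <;> simp [rev, h]) hd
  have hd_mem : (e, d) ∈ M :=
    hmax.2 hM' ((Set.subset_insert _ _).trans hsub) (hsub (Set.mem_insert _ _))
  cases d
  exacts [h.2 hd_mem, h.1 hd_mem]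

theorem exists_strongConn_orientation
    (hcut : ∀ U : Set V, U.Nonempty → U ≠ Set.univ → ¬ G.IsDirectedCut U)
    (hbr : ∀ e, Relation.ReflTransGen (G.adjIn {e' | e' ≠ e}) (G.fst e) (G.snd e)) :
    ∃ o, G.IsOrientation o ∧ G.StrongConn o := by
  classical
  obtain ⟨M, hM, htotal⟩ := exists_isCyclicPartialOrientation_total hcut hbr
  refine ⟨fun e => decide ((e, true) ∈ M), fun e he => decide_eq_true (hM.directed_mem e he),
    fun u v => ?_⟩
  rw [step_eq]
  refine Relation.ReflTransGen.mono (G.arcAdj_mono ?_) _ _ (hM.reflTransGen_avail hcut u v)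
  rintro ⟨e, _ | _⟩ ha
  · simpa [avail, rev] using ha
  · simpa using (htotal e).resolve_right ha

end Sufficiency

end MixedGraph

/-- Theorem 61.4 of Schrijver: the undirected edges of a mixed graph `G` can be
oriented so as to obtain a strongly connected digraph if and only if `G` is
2-edge-connected and there is no nonempty proper subset `U` of the vertices
such that every edge of the cut `δ(U)` is directed and oriented from `U` to
its complement. -/
theorem mixedGraph_strongly_connected_orientation_iff
    {V E : Type*} (G : MixedGraph V E) :
    (∃ o : E → Bool, G.IsOrientation o ∧ G.StrongConn o) ↔
      G.TwoEdgeConnected ∧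
      ¬ ∃ U : Set V, U.Nonempty ∧ U ≠ Set.univ ∧
        ∀ e : E, Xor' (G.fst e ∈ U) (G.snd e ∈ U) →
          e ∈ G.directed ∧ G.fst e ∈ U ∧ G.snd e ∉ U := by
  constructor
  · rintro ⟨o, ho, hs⟩
    exact ⟨G.twoEdgeConnected_of_strongConn hs,
      fun ⟨U, hne, hU, hcut⟩ => G.not_isDirectedCut_of_strongConn ho hs hne hU hcut⟩
  · rintro ⟨⟨-, hbr⟩, hcut⟩
    exact G.exists_strongConn_orientation (fun U hne hU h => hcut ⟨U, hne, hU, h⟩)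
      (fun e => hbr e _ _)
end
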